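/- For all real θ with 0 < θ < π and all positive reals a, b, with z > 0 defined by cosh²(z)·sin²(θ/2) = cosh²(a) + cosh²(b) + 2cos(θ/2)cosh(a)cosh(b), one has: [arcsin(cosh(a)/cosh(z)) − arcsin(sinh(a)/sinh(z))] + [arcsin(cosh(b)/cosh(z)) − arcsin(sinh(b)/sinh(z))] = 2·arctan( sin(θ/2) / (cos(θ/2) + exp(a + b)) ). -/

import Mathlib

/-!
Put `s = sin (θ / 2)` and `c = cos (θ / 2)`. The relation defining `z` says that
`(c cosh a + cosh b)² + (s cosh a)² = (s cosh z)²`, and the same with `sinh` in place of `cosh`,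
so every `arcsin` in the statement is the argument `arctan (s cosh a / (c cosh a + cosh b))`
(resp. with `sinh a`) of a complex number in the right half-plane. Arguments add under
multiplication: the two `cosh` angles add up to `θ / 2`, being two angles of a triangle, while
the two `sinh` angles add up to `arg (1 + c cosh (a + b) + i s sinh (a + b))`, which falls short
of `θ / 2` by `2 arg (c + exp (a + b) + i s)`.
-/

open Real

/-- `arctan (y / x)` is the argument of `x + i y` for `x > 0`; the hypotheses say that
`(x₁ + i y₁) (x₂ + i y₂) = k (x + i y)`. -/
theorem arctan_div_add_arctan_div {x₁ y₁ x₂ y₂ k x y : ℝ} (hx₁ : 0 < x₁) (hx₂ : 0 < x₂)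
    (hk : 0 < k) (hx : 0 < x) (hnum : y₁ * x₂ + x₁ * y₂ = k * y)
    (hden : x₁ * x₂ - y₁ * y₂ = k * x) :
    arctan (y₁ / x₁) + arctan (y₂ / x₂) = arctan (y / x) := by
  have hden_pos : 0 < x₁ * x₂ - y₁ * y₂ := hden ▸ mul_pos hk hx
  have hlt : y₁ / x₁ * (y₂ / x₂) < 1 := by
    rw [div_mul_div_comm, div_lt_one (mul_pos hx₁ hx₂)]
    linarith
  rw [arctan_add hlt]
  congr 1
  calc (y₁ / x₁ + y₂ / x₂) / (1 - y₁ / x₁ * (y₂ / x₂))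
      = (y₁ * x₂ + x₁ * y₂) / (x₁ * x₂ - y₁ * y₂) := by
        field_simp
    _ = y / x := by rw [hnum, hden, mul_div_mul_left _ _ hk.ne']

theorem arcsin_div_eq_arctan_div {x y r : ℝ} (hx : 0 < x) (hr : 0 < r)
    (h : x ^ 2 + y ^ 2 = r ^ 2) : arcsin (y / r) = arctan (y / x) := by
  have hsqrt : √(1 + (y / x) ^ 2) = r / x := by
    rw [← sqrt_sq (div_pos hr hx).le]
    congr 1
    field_simp
    linarith
  rw [arctan_eq_arcsin, hsqrt, div_div_div_cancel_right₀ hx.ne']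

section

variable {s c : ℝ}

/-- With `s = sin α`, `c = cos α`: the two angles of a triangle whose sides `p`, `q` enclose
the angle `π - α`. -/
theorem arctan_mul_div_add_arctan_mul_div {p q : ℝ} (hc : 0 < c) (hsc : s ^ 2 + c ^ 2 = 1)
    (hp : 0 < p) (hq : 0 < q) :
    arctan (s * p / (c * p + q)) + arctan (s * q / (c * q + p)) = arctan (s / c) :=
  arctan_div_add_arctan_div (by positivity) (by positivity)
    (k := p ^ 2 + q ^ 2 + 2 * c * p * q) (by positivity) hc (by ring)
    (by linear_combination (-p * q) * hsc)

theorem arctan_sinh_add_arctan_sinh (hc : 0 ≤ c) (hsc : s ^ 2 + c ^ 2 = 1) (a b : ℝ) :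
    arctan (s * sinh a / (c * cosh a + cosh b)) + arctan (s * sinh b / (c * cosh b + cosh a)) =
      arctan (s * sinh (a + b) / (1 + c * cosh (a + b))) := by
  have ha := cosh_sq_sub_sinh_sq a
  have hb := cosh_sq_sub_sinh_sq b
  refine arctan_div_add_arctan_div (by positivity) (by positivity)
    (k := c + cosh (a - b)) (by positivity) (by positivity) ?_ ?_
  · rw [sinh_add, cosh_sub]
    linear_combination (-s * sinh a * cosh a) * hb + (-s * cosh b * sinh b) * ha
  · rw [cosh_add, cosh_sub]
    linear_combination (-sinh a * sinh b) * hsc - c * (cosh b ^ 2 - 1) * ha -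
      c * sinh a ^ 2 * hb

theorem arctan_sinh_div_add_two_mul_arctan {t : ℝ} (hc : 0 < c) (hsc : s ^ 2 + c ^ 2 = 1)
    (ht : 0 ≤ t) :
    arctan (s * sinh t / (1 + c * cosh t)) + 2 * arctan (s / (c + exp t)) = arctan (s / c) := by
  have hpos : 0 < c + exp t := by positivity
  have hsq : s ^ 2 < (c + exp t) ^ 2 := by nlinarith [one_le_exp ht]
  obtain ⟨hlo, hhi⟩ := abs_lt.mp (abs_lt_of_sq_lt_sq hsq hpos.le)
  rw [two_mul_arctan (by rwa [lt_div_iff₀ hpos, neg_one_mul]) ((div_lt_one hpos).mpr hhi),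
    show 2 * (s / (c + exp t)) / (1 - (s / (c + exp t)) ^ 2) =
      2 * s * (c + exp t) / ((c + exp t) ^ 2 - s ^ 2) by field_simp]
  have hd := cosh_sq_sub_sinh_sq t
  refine arctan_div_add_arctan_div (by positivity) (sub_pos.mpr hsq)
    (k := 2 * exp t * (c + cosh t) ^ 2) (by positivity) hc ?_ ?_
  · rw [← cosh_add_sinh]
    linear_combination (-s * sinh t) * hsc + (-s * (2 * c + sinh t + 2 * cosh t)) * hd
  · rw [← cosh_add_sinh]
    linear_combination (-(1 + c * cosh t) - 2 * sinh t * (c + cosh t + sinh t)) * hsc +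
      (1 - c * cosh t - 2 * c ^ 2) * hd

variable {a b z : ℝ}

theorem arcsin_cosh_div_cosh_eq_arctan (hs : 0 < s) (hc : 0 ≤ c) (hsc : s ^ 2 + c ^ 2 = 1)
    (hrel : cosh z ^ 2 * s ^ 2 = cosh a ^ 2 + cosh b ^ 2 + 2 * c * cosh a * cosh b) :
    arcsin (cosh a / cosh z) = arctan (s * cosh a / (c * cosh a + cosh b)) := by
  rw [← mul_div_mul_left _ _ hs.ne']
  exact arcsin_div_eq_arctan_div (by positivity) (by positivity)
    (by linear_combination cosh a ^ 2 * hsc - hrel)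

theorem arcsin_sinh_div_sinh_eq_arctan (hs : 0 < s) (hc : 0 ≤ c) (hsc : s ^ 2 + c ^ 2 = 1)
    (hz : 0 < z)
    (hrel : cosh z ^ 2 * s ^ 2 = cosh a ^ 2 + cosh b ^ 2 + 2 * c * cosh a * cosh b) :
    arcsin (sinh a / sinh z) = arctan (s * sinh a / (c * cosh a + cosh b)) := by
  rw [← mul_div_mul_left _ _ hs.ne']
  have hsinh_z : 0 < sinh z := sinh_pos_iff.mpr hz
  exact arcsin_div_eq_arctan_div (by positivity) (by positivity)
    (by linear_combination cosh a ^ 2 * hsc - hrel - s ^ 2 * cosh_sq_sub_sinh_sq a +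
      s ^ 2 * cosh_sq_sub_sinh_sq z)

end

theorem stmt_3 (θ a b z : ℝ) (hθ0 : 0 < θ) (hθπ : θ < Real.pi)
    (ha : 0 < a) (hb : 0 < b) (hz : 0 < z)
    (hrel : Real.cosh z ^ 2 * Real.sin (θ / 2) ^ 2 =
      Real.cosh a ^ 2 + Real.cosh b ^ 2 +
        2 * Real.cos (θ / 2) * Real.cosh a * Real.cosh b) :
    (Real.arcsin (Real.cosh a / Real.cosh z) - Real.arcsin (Real.sinh a / Real.sinh z)) +
        (Real.arcsin (Real.cosh b / Real.cosh z) - Real.arcsin (Real.sinh b / Real.sinh z)) =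
      2 * Real.arctan (Real.sin (θ / 2) / (Real.cos (θ / 2) + Real.exp (a + b))) := by
  have hs : 0 < sin (θ / 2) := sin_pos_of_pos_of_lt_pi (by linarith) (by linarith)
  have hc : 0 < cos (θ / 2) := cos_pos_of_mem_Ioo ⟨by linarith, by linarith⟩
  have hsc := sin_sq_add_cos_sq (θ / 2)
  have hrel' : cosh z ^ 2 * sin (θ / 2) ^ 2 =
      cosh b ^ 2 + cosh a ^ 2 + 2 * cos (θ / 2) * cosh b * cosh a := by
    linear_combination hrel
  rw [arcsin_cosh_div_cosh_eq_arctan hs hc.le hsc hrel,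
    arcsin_cosh_div_cosh_eq_arctan hs hc.le hsc hrel',
    arcsin_sinh_div_sinh_eq_arctan hs hc.le hsc hz hrel,
    arcsin_sinh_div_sinh_eq_arctan hs hc.le hsc hz hrel']
  linarith [arctan_mul_div_add_arctan_mul_div hc hsc (cosh_pos a) (cosh_pos b),
    arctan_sinh_add_arctan_sinh hc.le hsc a b,
    arctan_sinh_div_add_two_mul_arctan hc hsc (add_pos ha hb).le]
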